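/- Let m be a positive even integer and suppose the Alon–Tarsi/Huang–Rota column Latin square property holds for m (i.e., #CELS(m) ≠ #COLS(m)). Then for every 1 ≤ i ≤ m there exists a pattern 𝒜 of size (i,m) with #L^+_𝒜 ≠ #L^-_𝒜, and consequently the sum ∑_{𝒜 ∈ S(i,m)} (#L^+_𝒜 − #L^-_𝒜)^2 is strictly positive. -/

import Mathlib

open Finset

/-- A Latin `(i,m)`-rectangle. -/
def IsLatinRect {i m : ℕ} (A : Fin i → Fin m → Fin m) : Prop :=
  (∀ p, Function.Bijective (A p)) ∧ ∀ q, Function.Injective fun p => A p q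

/-- The column sign `ε_c(A)`. -/
def colSign {i m : ℕ} (A : Fin i → Fin m → Fin m) : ℤ :=
  ∏ q : Fin m, Int.sign (∏ p : Fin i, ∏ p' ∈ Finset.univ.filter (fun p' => p < p'),
    (((A p' q : ℕ) : ℤ) - ((A p q : ℕ) : ℤ)))

/-- The pattern of a rectangle: the tuple of underlying sets of its columns. -/
def patternOf {i m : ℕ} (A : Fin i → Fin m → Fin m) : Fin m → Finset (Fin m) :=
  fun q => Finset.image (fun p => A p q) Finset.univ

/-- A pattern of size `(i,m)`: an `m`-tuple of `i`-element subsets of `Fin m` such that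
each element of `Fin m` occurs in exactly `i` of the sets. -/
def IsPattern (i : ℕ) {m : ℕ} (P : Fin m → Finset (Fin m)) : Prop :=
  (∀ q, (P q).card = i) ∧ ∀ x : Fin m, (Finset.univ.filter fun q => x ∈ P q).card = i

/-- The number of column-even Latin rectangles with pattern `P`. -/
noncomputable def Lpos (i : ℕ) {m : ℕ} (P : Fin m → Finset (Fin m)) : ℕ :=
  Nat.card {A : Fin i → Fin m → Fin m // IsLatinRect A ∧ patternOf A = P ∧ colSign A = 1}

/-- The number of column-odd Latin rectangles with pattern `P`. -/
noncomputable def Lneg (i : ℕ) {m : ℕ} (P : Fin m → Finset (Fin m)) : ℕ :=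
  Nat.card {A : Fin i → Fin m → Fin m // IsLatinRect A ∧ patternOf A = P ∧ colSign A = -1}

/-- The number of column-even Latin `(m,m)`-squares. -/
noncomputable def CELS (m : ℕ) : ℕ :=
  Nat.card {A : Fin m → Fin m → Fin m // IsLatinRect A ∧ colSign A = 1}

/-- The number of column-odd Latin `(m,m)`-squares. -/
noncomputable def COLS (m : ℕ) : ℕ :=
  Nat.card {A : Fin m → Fin m → Fin m // IsLatinRect A ∧ colSign A = -1}


/-! Write `D_i(P) = #L⁺ - #L⁻` as the sum of the column signs of the Latin `(i,m)`-rectangles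
with pattern `P`. Deleting the last row of a Latin `(i+1,m)`-rectangle with pattern `P` leaves
a Latin `(i,m)`-rectangle whose pattern `Q` satisfies `Q q ⊆ P q` for every column `q`;
conversely such a rectangle extends in exactly one way, the new entry of column `q` being the
single element of `P q \ Q q`, and appending it multiplies the column sign by a factor
`ε(P,Q)` that depends only on `P` and `Q`. Hence `D_{i+1}(P) = ∑_Q ε(P,Q) D_i(Q)`, so if `D_i`
vanishes on every `(i,m)`-pattern then so does `D_{i+1}`. Since the only `(m,m)`-pattern is
the constant one, with `D_m = #CELS(m) - #COLS(m) ≠ 0`, descending induction yields a pattern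
of every size `i ≤ m` with `D_i ≠ 0`. -/

section

open scoped Classical

variable {i m : ℕ}

def diffProd {R : Type*} [CommRing R] {n : ℕ} (v : Fin n → R) : R :=
  ∏ p, ∏ p' ∈ univ.filter (fun p' => p < p'), (v p' - v p)

lemma diffProd_snoc {R : Type*} [CommRing R] {n : ℕ} (v : Fin n → R) (x : R) :
    diffProd (Fin.snoc v x : Fin (n + 1) → R) = diffProd v * ∏ p, (x - v p) := by
  have hlast : univ.filter (fun p' => Fin.last n < p') = ∅ := by
    ext p'; simp [(Fin.le_last p').not_gt]
  rw [diffProd, Fin.prod_univ_castSucc, hlast, prod_empty, mul_one, diffProd,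
    ← prod_mul_distrib]
  refine prod_congr rfl fun p _ => ?_
  rw [prod_filter, prod_filter, Fin.prod_univ_castSucc]
  simp [Fin.castSucc_lt_last]

lemma colSign_eq_prod_sign_diffProd (A : Fin i → Fin m → Fin m) :
    colSign A = ∏ q, Int.sign (diffProd fun p => ((A p q : ℕ) : ℤ)) :=
  rfl

lemma colSign_snoc (B : Fin i → Fin m → Fin m) (r : Fin m → Fin m) :
    colSign (Fin.snoc B r : Fin (i + 1) → Fin m → Fin m) =
      colSign B * ∏ q, Int.sign (∏ p, (((r q : ℕ) : ℤ) - ((B p q : ℕ) : ℤ))) := by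
  have hcol q : (fun p => (((Fin.snoc B r : Fin (i + 1) → Fin m → Fin m) p q : ℕ) : ℤ)) =
      Fin.snoc (fun p => ((B p q : ℕ) : ℤ)) ((r q : ℕ) : ℤ) := by
    funext p; refine Fin.lastCases ?_ (fun p => ?_) p <;> simp
  simp only [colSign_eq_prod_sign_diffProd, hcol, diffProd_snoc, Int.sign_mul, prod_mul_distrib]

lemma card_patternOf {A : Fin i → Fin m → Fin m} (hA : IsLatinRect A) (q : Fin m) :
    #(patternOf A q) = i := by
  rw [patternOf, card_image_of_injective _ (hA.2 q), card_univ, Fintype.card_fin]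

lemma isPattern_patternOf {A : Fin i → Fin m → Fin m} (hA : IsLatinRect A) :
    IsPattern i (patternOf A) := by
  refine ⟨card_patternOf hA, fun x => ?_⟩
  choose g hg using fun p => (hA.1 p).2 x
  have hfiber : univ.filter (fun q => x ∈ patternOf A q) = univ.image g := by
    ext q
    simp only [patternOf, mem_filter, mem_univ, true_and, mem_image]
    exact ⟨fun ⟨p, hp⟩ => ⟨p, (hA.1 p).1 (by rw [hg, hp])⟩, fun ⟨p, hp⟩ => ⟨p, hp ▸ hg p⟩⟩
  have hg_inj : Function.Injective g := fun p p' h =>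
    hA.2 (g p') (show A p (g p') = A p' (g p') by rw [← h, hg, h, hg])
  rw [hfiber, card_image_of_injective _ hg_inj, card_univ, Fintype.card_fin]

lemma patternOf_snoc (B : Fin i → Fin m → Fin m) (r : Fin m → Fin m) (q : Fin m) :
    patternOf (Fin.snoc B r : Fin (i + 1) → Fin m → Fin m) q = insert (r q) (patternOf B q) := by
  ext x
  simp only [patternOf, mem_image, mem_insert, mem_univ, true_and, Fin.exists_fin_succ',
    Fin.snoc_castSucc, Fin.snoc_last]
  tauto

lemma isLatinRect_snoc_iff {B : Fin i → Fin m → Fin m} {r : Fin m → Fin m} :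
    IsLatinRect (Fin.snoc B r : Fin (i + 1) → Fin m → Fin m) ↔
      IsLatinRect B ∧ Function.Bijective r ∧ ∀ q, r q ∉ patternOf B q := by
  have hcol q : (fun p => (Fin.snoc B r : Fin (i + 1) → Fin m → Fin m) p q) =
      Fin.snoc (fun p => B p q) (r q) := by
    funext p; refine Fin.lastCases ?_ (fun p => ?_) p <;> simp
  simp only [IsLatinRect, hcol, Fin.snoc_injective_iff, Fin.forall_fin_succ', Fin.snoc_castSucc,
    Fin.snoc_last, patternOf, mem_image, mem_univ, true_and, Set.mem_range, forall_and]
  tauto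

lemma bijective_of_forall_mem_sdiff {P Q : Fin m → Finset (Fin m)} {r : Fin m → Fin m}
    (hP : IsPattern (i + 1) P) (hQ : IsPattern i Q) (hQP : Q ≤ P)
    (hr : ∀ q, r q ∈ P q \ Q q) : Function.Bijective r := by
  refine Finite.surjective_iff_bijective.1 fun x => ?_
  obtain ⟨q, hxP, hxQ⟩ := exists_mem_notMem_of_card_lt_card
    (s := univ.filter fun q => x ∈ Q q) (t := univ.filter fun q => x ∈ P q)
    (by rw [hP.2, hQ.2]; omega)
  have hsingleton : #(P q \ Q q) = 1 := by
    rw [card_sdiff_of_subset (hQP q), hP.1, hQ.1]; omega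
  have hx : x ∈ P q \ Q q :=
    mem_sdiff.2 ⟨(mem_filter.1 hxP).2, fun h => hxQ (mem_filter.2 ⟨mem_univ q, h⟩)⟩
  exact ⟨q, card_le_one.1 hsingleton.le _ (hr q) _ hx⟩

lemma isLatinRect_snoc_and_patternOf_snoc_eq_iff {P : Fin m → Finset (Fin m)}
    {B : Fin i → Fin m → Fin m} {r : Fin m → Fin m} (hP : IsPattern (i + 1) P) :
    (IsLatinRect (Fin.snoc B r : Fin (i + 1) → Fin m → Fin m) ∧
        patternOf (Fin.snoc B r : Fin (i + 1) → Fin m → Fin m) = P) ↔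
      (IsLatinRect B ∧ patternOf B ≤ P) ∧ ∀ q, r q ∈ P q \ patternOf B q := by
  rw [isLatinRect_snoc_iff, funext_iff]
  simp only [patternOf_snoc]
  constructor
  · rintro ⟨⟨hB, -, hr⟩, hpat⟩
    refine ⟨⟨hB, fun q => ?_⟩, fun q => mem_sdiff.2 ⟨?_, hr q⟩⟩
    · rw [← hpat q]; exact subset_insert _ _
    · rw [← hpat q]; exact mem_insert_self _ _
  · rintro ⟨⟨hB, hBP⟩, hr⟩
    have hrP q : r q ∈ P q := (mem_sdiff.1 (hr q)).1
    have hrB q : r q ∉ patternOf B q := (mem_sdiff.1 (hr q)).2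
    refine ⟨⟨hB, bijective_of_forall_mem_sdiff hP (isPattern_patternOf hB) hBP hr, hrB⟩,
      fun q => eq_of_subset_of_card_le (insert_subset (hrP q) (hBP q)) ?_⟩
    rw [hP.1, card_insert_of_notMem (hrB q), card_patternOf hB]

noncomputable def signedCount (i : ℕ) {m : ℕ} (P : Fin m → Finset (Fin m)) : ℤ :=
  ∑ A ∈ univ.filter (fun A : Fin i → Fin m → Fin m => IsLatinRect A ∧ patternOf A = P), colSign A

lemma sum_eq_card_filter_sub_card_filter {α : Type*} (s : Finset α) (f : α → ℤ)
    (hf : ∀ a ∈ s, f a = 1 ∨ f a = 0 ∨ f a = -1) :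
    ∑ a ∈ s, f a = #(s.filter (f · = 1)) - #(s.filter (f · = -1)) := by
  rw [← sum_boole, ← sum_boole, ← sum_sub_distrib]
  refine sum_congr rfl fun a ha => ?_
  rcases hf a ha with h | h | h <;> simp [h]

lemma colSign_trichotomy (A : Fin i → Fin m → Fin m) :
    colSign A = 1 ∨ colSign A = 0 ∨ colSign A = -1 :=
  prod_induction _ (fun s : ℤ => s = 1 ∨ s = 0 ∨ s = -1)
    (by rintro a b (rfl | rfl | rfl) (rfl | rfl | rfl) <;> simp) (Or.inl rfl)
    fun _ _ => Int.sign_trichotomy _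

lemma natCast_Lpos_sub_natCast_Lneg (P : Fin m → Finset (Fin m)) :
    (Lpos i P : ℤ) - Lneg i P = signedCount i P := by
  rw [signedCount, sum_eq_card_filter_sub_card_filter _ _ fun A _ => colSign_trichotomy A, Lpos,
    Lneg, Nat.card_eq_fintype_card, Nat.card_eq_fintype_card, Fintype.card_subtype,
    Fintype.card_subtype, filter_filter, filter_filter]
  simp only [and_assoc]

/-- For patterns `Q ≤ P` of sizes `i` and `i + 1` each `P q \ Q q` is a singleton `{y}`, so the
sum over it just picks out the sign change caused by putting `y` below column `q`. -/
noncomputable def extSign (P Q : Fin m → Finset (Fin m)) : ℤ :=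
  ∏ q, ∑ y ∈ P q \ Q q, Int.sign (∏ x ∈ Q q, (((y : ℕ) : ℤ) - ((x : ℕ) : ℤ)))

lemma sum_colSign_snoc (P : Fin m → Finset (Fin m)) {B : Fin i → Fin m → Fin m}
    (hB : IsLatinRect B) :
    ∑ r ∈ Fintype.piFinset (fun q => P q \ patternOf B q),
        colSign (Fin.snoc B r : Fin (i + 1) → Fin m → Fin m) =
      colSign B * extSign P (patternOf B) := by
  rw [extSign, prod_univ_sum, mul_sum]
  refine sum_congr rfl fun r _ => ?_
  rw [colSign_snoc]
  congr 1
  refine prod_congr rfl fun q _ => ?_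
  rw [patternOf, prod_image fun p _ p' _ h => hB.2 q h]

lemma signedCount_succ_eq_sum {P : Fin m → Finset (Fin m)} (hP : IsPattern (i + 1) P) :
    signedCount (i + 1) P =
      ∑ B ∈ univ.filter (fun B : Fin i → Fin m → Fin m => IsLatinRect B ∧ patternOf B ≤ P),
        colSign B * extSign P (patternOf B) := by
  rw [← sum_congr rfl fun B hB => sum_colSign_snoc P (mem_filter.1 hB).2.1,
    ← sum_sigma (σ := fun _ => Fin m → Fin m) _ _
      fun x => colSign (Fin.snoc x.1 x.2 : Fin (i + 1) → Fin m → Fin m), signedCount]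
  refine sum_nbij' (fun A => ⟨Fin.init A, A (Fin.last i)⟩) (fun x => Fin.snoc x.1 x.2)
    (fun A hA => ?_) (fun x hx => ?_) (fun A _ => Fin.snoc_init_self A)
    (fun x _ => by simp) (fun A _ => by simp)
  · rw [mem_filter, ← Fin.snoc_init_self A, isLatinRect_snoc_and_patternOf_snoc_eq_iff hP] at hA
    simpa [Fintype.mem_piFinset] using hA
  · rw [mem_sigma, mem_filter, Fintype.mem_piFinset] at hx
    simpa [isLatinRect_snoc_and_patternOf_snoc_eq_iff hP] using hx

lemma signedCount_succ {P : Fin m → Finset (Fin m)} (hP : IsPattern (i + 1) P) :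
    signedCount (i + 1) P =
      ∑ Q ∈ univ.filter (fun Q => IsPattern i Q ∧ Q ≤ P), extSign P Q * signedCount i Q := by
  have hmaps : ∀ B ∈ univ.filter (fun B : Fin i → Fin m → Fin m =>
      IsLatinRect B ∧ patternOf B ≤ P),
        patternOf B ∈ univ.filter (fun Q => IsPattern i Q ∧ Q ≤ P) := by
    simp only [mem_filter, mem_univ, true_and]
    exact fun B hB => ⟨isPattern_patternOf hB.1, hB.2⟩
  rw [signedCount_succ_eq_sum hP, ← sum_fiberwise_of_maps_to hmaps]
  refine sum_congr rfl fun Q hQ => ?_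
  have hQP : Q ≤ P := (mem_filter.1 hQ).2.2
  rw [signedCount, mul_sum, filter_filter]
  refine sum_congr (filter_congr fun B _ => ?_) fun B hB => ?_
  · exact ⟨fun h => ⟨h.1.1, h.2⟩, fun h => ⟨⟨h.1, h.2 ▸ hQP⟩, h.2⟩⟩
  · rw [(mem_filter.1 hB).2.2, mul_comm]

lemma exists_signedCount_ne_zero_of_succ
    (h : ∃ P : Fin m → Finset (Fin m), IsPattern (i + 1) P ∧ signedCount (i + 1) P ≠ 0) :
    ∃ Q : Fin m → Finset (Fin m), IsPattern i Q ∧ signedCount i Q ≠ 0 := by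
  obtain ⟨P, hP, hne⟩ := h
  by_contra! hzero
  refine hne ((signedCount_succ hP).trans (sum_eq_zero fun Q hQ => ?_))
  rw [hzero Q (mem_filter.1 hQ).2.1, mul_zero]

lemma exists_signedCount_ne_zero_of_le {j : ℕ} (hij : i ≤ j)
    (h : ∃ P : Fin m → Finset (Fin m), IsPattern j P ∧ signedCount j P ≠ 0) :
    ∃ Q : Fin m → Finset (Fin m), IsPattern i Q ∧ signedCount i Q ≠ 0 := by
  induction j, hij using Nat.le_induction with
  | base => exact h
  | succ j _ ih => exact ih (exists_signedCount_ne_zero_of_succ h)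

lemma isPattern_const_univ (m : ℕ) : IsPattern m fun _ : Fin m => (univ : Finset (Fin m)) :=
  ⟨fun _ => by simp, fun _ => by simp⟩

lemma patternOf_eq_const_univ {A : Fin m → Fin m → Fin m} (hA : IsLatinRect A) :
    patternOf A = fun _ => univ :=
  funext fun q => eq_univ_of_card _ (by rw [card_patternOf hA, Fintype.card_fin])

lemma signedCount_const_univ (m : ℕ) :
    signedCount m (fun _ : Fin m => (univ : Finset (Fin m))) = CELS m - COLS m := by
  have hLatin : ∀ (s : ℤ) (A : Fin m → Fin m → Fin m),
      (IsLatinRect A ∧ patternOf A = (fun _ => univ) ∧ colSign A = s) ↔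
        (IsLatinRect A ∧ colSign A = s) :=
    fun s A => ⟨fun h => ⟨h.1, h.2.2⟩, fun h => ⟨h.1, patternOf_eq_const_univ h.1, h.2⟩⟩
  rw [← natCast_Lpos_sub_natCast_Lneg, Lpos, Lneg, CELS, COLS,
    Nat.card_congr (Equiv.subtypeEquivRight (hLatin 1)),
    Nat.card_congr (Equiv.subtypeEquivRight (hLatin (-1)))]

end

open scoped Classical in
theorem alonTarsi_gives_positive_pattern_sum_general (m : ℕ) (h : CELS m ≠ COLS m) :
    ∀ i : ℕ, 1 ≤ i → i ≤ m →
      (∃ P : Fin m → Finset (Fin m), IsPattern i P ∧ Lpos i P ≠ Lneg i P) ∧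
      0 < ∑ P ∈ Finset.univ.filter (fun P : Fin m → Finset (Fin m) => IsPattern i P),
            (((Lpos i P : ℤ) - (Lneg i P : ℤ)) ^ 2) := by
  intro i _ him
  have hsquare : signedCount m (fun _ : Fin m => (univ : Finset (Fin m))) ≠ 0 := by
    rw [signedCount_const_univ, sub_ne_zero]
    exact_mod_cast h
  obtain ⟨P, hP, hne⟩ := exists_signedCount_ne_zero_of_le him ⟨_, isPattern_const_univ m, hsquare⟩
  rw [← natCast_Lpos_sub_natCast_Lneg, sub_ne_zero] at hne
  refine ⟨⟨P, hP, fun hc => hne (by rw [hc])⟩, ?_⟩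
  refine sum_pos' (fun _ _ => sq_nonneg _) ⟨P, by simpa using hP, ?_⟩
  exact sq_pos_of_ne_zero (sub_ne_zero.2 hne)

open scoped Classical in
/-- Let `m` be a positive even integer satisfying the Alon–Tarsi/Huang–Rota column Latin
square property `#CELS(m) ≠ #COLS(m)`.  Then for every `1 ≤ i ≤ m` there is a pattern `𝒜`
of size `(i,m)` with `#L^+_𝒜 ≠ #L^-_𝒜`, and consequently
`∑_{𝒜 ∈ S(i,m)} (#L^+_𝒜 − #L^-_𝒜)² > 0`. -/
theorem alonTarsi_gives_positive_pattern_sum (m : ℕ) (hm : 0 < m) (heven : Even m)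
    (h : CELS m ≠ COLS m) :
    ∀ i : ℕ, 1 ≤ i → i ≤ m →
      (∃ P : Fin m → Finset (Fin m), IsPattern i P ∧ Lpos i P ≠ Lneg i P) ∧
      0 < ∑ P ∈ Finset.univ.filter (fun P : Fin m → Finset (Fin m) => IsPattern i P),
            (((Lpos i P : ℤ) - (Lneg i P : ℤ)) ^ 2) :=
  alonTarsi_gives_positive_pattern_sum_general m h
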